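/- For every b > 1/4, sup_{m ∈ ℤ} Σ_{n ≥ 1} ⟨m − n²⟩^{−2b} < ∞, where ⟨x⟩ = 1 + |x|. -/

import Mathlib

/-!
We may lower the exponent to `s ∈ (1/2, 1)` and take `m ≥ 0`. With `r = ⌊√m⌋`, the squares
`k² ≤ m` satisfy `m - k² ≥ r (r - k)` and the squares `k² > m` satisfy `k² - m ≥ r (k - r - 1)`,
so the `2r + 1` terms nearest to `m` are bounded by twice `∑_{d ≤ r} (1 + d r)^{-s}`, which is
`O(1 + r^{1-2s}) = O(1)` because `∑_{d ≤ r} d^{-s} = O(r^{1-s})`. Beyond them `k² ≥ 2m`, so the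
terms are `O(k^{-2s})` with `2s > 1`.
-/

open Finset Real

lemma one_sub_mul_rpow_neg_le {s x : ℝ} (hs0 : 0 ≤ s) (hs1 : s ≤ 1) (hx : 1 ≤ x) :
    (1 - s) * x ^ (-s) ≤ x ^ (1 - s) - (x - 1) ^ (1 - s) := by
  have hx0 : 0 < x := by linarith
  have bernoulli : (1 + -x⁻¹) ^ (1 - s) ≤ 1 + (1 - s) * -x⁻¹ :=
    rpow_one_add_le_one_add_mul_self (by simpa using inv_le_one_of_one_le₀ hx)
      (by linarith) (by linarith)
  have hsplit : x - 1 = x * (1 + -x⁻¹) := by rw [mul_add, mul_neg, mul_inv_cancel₀ hx0.ne']; ring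
  have hneg : x ^ (-s) = x ^ (1 - s) / x := by rw [← rpow_sub_one hx0.ne']; ring_nf
  rw [hsplit, mul_rpow hx0.le (by simpa using inv_le_one_of_one_le₀ hx), hneg]
  calc (1 - s) * (x ^ (1 - s) / x) = x ^ (1 - s) - x ^ (1 - s) * (1 + (1 - s) * -x⁻¹) := by
        field_simp; ring
    _ ≤ x ^ (1 - s) - x ^ (1 - s) * (1 + -x⁻¹) ^ (1 - s) := by gcongr

lemma one_sub_mul_sum_range_rpow_neg_le {s : ℝ} (hs0 : 0 ≤ s) (hs1 : s ≤ 1) (k : ℕ) :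
    (1 - s) * ∑ d ∈ range k, ((d : ℝ) + 1) ^ (-s) ≤ (k : ℝ) ^ (1 - s) := by
  rw [mul_sum]
  calc ∑ d ∈ range k, (1 - s) * ((d : ℝ) + 1) ^ (-s)
      ≤ ∑ d ∈ range k, (((d + 1 : ℕ) : ℝ) ^ (1 - s) - (d : ℝ) ^ (1 - s)) :=
        sum_le_sum fun d _ => by
          simpa using one_sub_mul_rpow_neg_le hs0 hs1 (x := d + 1) (by simp)
    _ = (k : ℝ) ^ (1 - s) - (0 : ℝ) ^ (1 - s) := by
        rw [sum_range_sub (fun d : ℕ => (d : ℝ) ^ (1 - s))]; simp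
    _ ≤ (k : ℝ) ^ (1 - s) := sub_le_self _ (rpow_nonneg le_rfl _)

lemma sum_range_succ_one_add_mul_rpow_neg_le {s : ℝ} (hs0 : 1 / 2 ≤ s) (hs1 : s < 1) (r : ℕ) :
    ∑ d ∈ range (r + 1), (1 + (d : ℝ) * r) ^ (-s) ≤ 1 + 1 / (1 - s) := by
  rw [sum_range_succ', Nat.cast_zero, zero_mul, add_zero, one_rpow, add_comm (1 : ℝ)]
  gcongr
  rcases Nat.eq_zero_or_pos r with rfl | hr
  · simpa using hs1.le
  have hr1 : (1 : ℝ) ≤ r := by exact_mod_cast hr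
  rw [le_div_iff₀' (by linarith), mul_sum]
  calc ∑ d ∈ range r, (1 - s) * (1 + ((d + 1 : ℕ) : ℝ) * r) ^ (-s)
      ≤ ∑ d ∈ range r, (1 - s) * (((d : ℝ) + 1) ^ (-s) * (r : ℝ) ^ (-s)) := by
        gcongr with d
        rw [← mul_rpow (by positivity) (by positivity)]
        exact rpow_le_rpow_of_nonpos (by positivity) (by push_cast; linarith) (by linarith)
    _ = (r : ℝ) ^ (-s) * ((1 - s) * ∑ d ∈ range r, ((d : ℝ) + 1) ^ (-s)) := by
        rw [mul_sum, mul_sum]; congr 1 with d; ring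
    _ ≤ (r : ℝ) ^ (-s) * (r : ℝ) ^ (1 - s) := by
        gcongr; exact one_sub_mul_sum_range_rpow_neg_le (by linarith) hs1.le r
    _ ≤ 1 := by
        rw [← rpow_add (by positivity)]
        exact rpow_le_one_of_one_le_of_nonpos hr1 (by linarith)

lemma summable_two_rpow_mul_add_one_rpow_neg {s : ℝ} (hs : 1 / 2 < s) :
    Summable fun n : ℕ => 2 ^ s * ((n : ℝ) + 1) ^ (-(2 * s)) := by
  refine Summable.mul_left _ ?_
  simpa using (summable_nat_add_iff 1).2 (summable_nat_rpow.2 (by linarith : -(2 * s) < -1))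

noncomputable def bracketSq (s m : ℝ) (n : ℕ) : ℝ := (1 + |m - ((n : ℝ) + 1) ^ 2|) ^ (-s)

namespace bracketSq

variable {s m : ℝ}

lemma nonneg (n : ℕ) : 0 ≤ bracketSq s m n := rpow_nonneg (by positivity) _

lemma antitone_exponent {t : ℝ} (hst : s ≤ t) (n : ℕ) : bracketSq t m n ≤ bracketSq s m n :=
  rpow_le_rpow_of_exponent_le (by simp) (by linarith)

lemma le_of_le_abs (hs : 0 ≤ s) {n : ℕ} {y : ℝ} (hy : 0 ≤ y) (h : y ≤ |m - ((n : ℝ) + 1) ^ 2|) :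
    bracketSq s m n ≤ (1 + y) ^ (-s) :=
  rpow_le_rpow_of_nonpos (by linarith) (by linarith) (by linarith)

lemma le_toNat (hs : 0 ≤ s) (m : ℤ) (n : ℕ) : bracketSq s m n ≤ bracketSq s m.toNat n := by
  rcases le_or_gt 0 m with hm | hm
  · rw [← Int.cast_natCast, Int.toNat_of_nonneg hm]
  · rw [Int.toNat_of_nonpos hm.le, Nat.cast_zero]
    refine le_of_le_abs hs (abs_nonneg _) ?_
    have : (m : ℝ) < 0 := by exact_mod_cast hm
    rw [abs_of_nonpos (by nlinarith), abs_of_nonpos (by nlinarith)]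
    linarith

lemma le_of_two_mul_le (hs : 0 ≤ s) {n : ℕ} (h : 2 * m ≤ ((n : ℝ) + 1) ^ 2) :
    bracketSq s m n ≤ 2 ^ s * ((n : ℝ) + 1) ^ (-(2 * s)) := by
  have hbase : ((n : ℝ) + 1) ^ 2 / 2 ≤ 1 + |m - ((n : ℝ) + 1) ^ 2| := by
    rw [abs_of_nonpos (by nlinarith)]; nlinarith
  calc bracketSq s m n ≤ (((n : ℝ) + 1) ^ 2 / 2) ^ (-s) :=
        rpow_le_rpow_of_nonpos (by positivity) hbase (by linarith)
    _ = 2 ^ s * ((n : ℝ) + 1) ^ (-(2 * s)) := by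
        rw [div_rpow (by positivity) zero_le_two, ← rpow_natCast, ← rpow_mul (by positivity),
          rpow_neg zero_le_two, div_inv_eq_mul, mul_comm]
        push_cast; ring_nf

lemma reflect_le (hs : 0 ≤ s) {r j : ℕ} (hj : j < r) (hm : (r : ℝ) ^ 2 ≤ m) :
    bracketSq s m (r - 1 - j) ≤ (1 + (j : ℝ) * r) ^ (-s) := by
  refine le_of_le_abs hs (by positivity) ?_
  rw [Nat.cast_sub (by omega), Nat.cast_sub (by omega), Nat.cast_one]
  have : (j : ℝ) + 1 ≤ r := by exact_mod_cast hj
  rw [abs_of_nonneg (by nlinarith)]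
  nlinarith

lemma add_le (hs : 0 ≤ s) {r : ℕ} (j : ℕ) (hm : m + 1 ≤ ((r : ℝ) + 1) ^ 2) :
    bracketSq s m (r + j) ≤ (1 + (j : ℝ) * r) ^ (-s) := by
  refine le_of_le_abs hs (by positivity) ?_
  have hj : (0 : ℝ) ≤ j := j.cast_nonneg
  have hr : (0 : ℝ) ≤ r := r.cast_nonneg
  push_cast
  rw [abs_of_nonpos (by nlinarith)]
  nlinarith

lemma sum_range_le (hs0 : 1 / 2 ≤ s) (hs1 : s < 1) {r : ℕ} (hlo : (r : ℝ) ^ 2 ≤ m)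
    (hhi : m + 1 ≤ ((r : ℝ) + 1) ^ 2) :
    ∑ n ∈ range (2 * r + 1), bracketSq s m n ≤ 2 * (1 + 1 / (1 - s)) := by
  have hs : 0 ≤ s := by linarith
  have hsum := sum_range_succ_one_add_mul_rpow_neg_le hs0 hs1 r
  have hbelow : ∑ n ∈ range r, bracketSq s m n ≤ ∑ d ∈ range (r + 1), (1 + (d : ℝ) * r) ^ (-s) :=
    calc ∑ n ∈ range r, bracketSq s m n = ∑ j ∈ range r, bracketSq s m (r - 1 - j) :=
          (sum_range_reflect _ r).symm
      _ ≤ ∑ j ∈ range r, (1 + (j : ℝ) * r) ^ (-s) :=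
          sum_le_sum fun j hj => reflect_le hs (mem_range.1 hj) hlo
      _ ≤ ∑ d ∈ range (r + 1), (1 + (d : ℝ) * r) ^ (-s) :=
          sum_le_sum_of_subset_of_nonneg (range_subset_range.2 r.le_succ)
            fun _ _ _ => rpow_nonneg (by positivity) _
  have habove : ∑ j ∈ range (r + 1), bracketSq s m (r + j) ≤
      ∑ d ∈ range (r + 1), (1 + (d : ℝ) * r) ^ (-s) :=
    sum_le_sum fun j _ => add_le hs j hhi
  rw [show 2 * r + 1 = r + (r + 1) by ring, sum_range_add]
  linarith

lemma summable_and_tsum_le (hs0 : 1 / 2 < s) (hs1 : s < 1) (m : ℕ) :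
    Summable (bracketSq s m) ∧ ∑' n, bracketSq s m n ≤
      2 * (1 + 1 / (1 - s)) + ∑' n : ℕ, 2 ^ s * ((n : ℝ) + 1) ^ (-(2 * s)) := by
  set g : ℕ → ℝ := fun n => 2 ^ s * ((n : ℝ) + 1) ^ (-(2 * s))
  have hg : Summable g := summable_two_rpow_mul_add_one_rpow_neg hs0
  set r := Nat.sqrt m
  set N := 2 * r + 1
  have hlo : (r : ℝ) ^ 2 ≤ m := by exact_mod_cast Nat.sqrt_le' m
  have hhi : (m : ℝ) + 1 ≤ ((r : ℝ) + 1) ^ 2 := by exact_mod_cast Nat.lt_succ_sqrt' m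
  have htail : ∀ n, bracketSq s m (n + N) ≤ g (n + N) := fun n =>
    le_of_two_mul_le (by linarith) (by push_cast [N]; nlinarith [(n.cast_nonneg : (0 : ℝ) ≤ n)])
  have hgN : Summable fun n => g (n + N) := (summable_nat_add_iff N).2 hg
  have hfN : Summable fun n => bracketSq s m (n + N) :=
    hgN.of_nonneg_of_le (fun _ => nonneg _) htail
  have hf : Summable (bracketSq s m) := (summable_nat_add_iff N).1 hfN
  refine ⟨hf, ?_⟩
  rw [← hf.sum_add_tsum_nat_add N]
  gcongr ?_ + ?_
  · exact sum_range_le hs0.le hs1 hlo hhi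
  · calc ∑' n, bracketSq s m (n + N) ≤ ∑' n, g (n + N) := hfN.tsum_le_tsum htail hgN
      _ ≤ ∑' n, g n := tsum_comp_le_tsum_of_inj hg (fun _ => by positivity) (add_left_injective N)

end bracketSq

open bracketSq in
theorem japanese_bracket_sum (b : ℝ) (hb : 1 / 4 < b) :
    (∀ m : ℤ, Summable (fun n : ℕ => (1 + |(m : ℝ) - ((n : ℝ) + 1) ^ 2|) ^ (-(2 * b)))) ∧
    ∃ C : ℝ, ∀ m : ℤ,
      (∑' n : ℕ, (1 + |(m : ℝ) - ((n : ℝ) + 1) ^ 2|) ^ (-(2 * b))) ≤ C := by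
  set s := min (2 * b) (3 / 4)
  have hs0 : 1 / 2 < s := lt_min (by linarith) (by norm_num)
  have hs1 : s < 1 := (min_le_right _ _).trans_lt (by norm_num)
  have hmaj : ∀ (m : ℤ) n, bracketSq (2 * b) m n ≤ bracketSq s m.toNat n := fun m n =>
    (antitone_exponent (min_le_left _ _) n).trans (le_toNat (by linarith) m n)
  have hbound := fun m : ℤ => summable_and_tsum_le hs0 hs1 m.toNat
  have hsum : ∀ m : ℤ, Summable (bracketSq (2 * b) m) := fun m =>
    (hbound m).1.of_nonneg_of_le (fun _ => nonneg _) (hmaj m)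
  exact ⟨hsum, _, fun m => ((hsum m).tsum_le_tsum (hmaj m) (hbound m).1).trans (hbound m).2⟩
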